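/- arXiv:2212.11870 — 3 statements merged into one kernel-verified Lean document; each statement's English description precedes it below -/
import Mathlib

section
/- Let f : ℝ^p → ℝ be continuously differentiable and x, x̄ ∈ ℝ^p. Then the Integrated Gradients attributions sum to the total change: ∑_{j∈[p]} (x_j − x̄_j)·∫_0^1 ∂_j f(x̄ + α(x − x̄)) dα = f(x) − f(x̄). -/
theorem stmt5 (p : ℕ) (f : (Fin p → ℝ) → ℝ) (hf : ContDiff ℝ 1 f) (x xb : Fin p → ℝ) :
    ∑ j : Fin p, (x j - xb j) * ∫ α in (0:ℝ)..1, fderiv ℝ f (xb + α • (x - xb)) (Pi.single j 1)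
      = f x - f xb := by
  set γ : ℝ → (Fin p → ℝ) := fun α => xb + α • (x - xb) with hγ
  have hγd : ∀ α : ℝ, HasDerivAt γ (x - xb) α := by
    intro α
    simpa [hγ] using ((hasDerivAt_id α).smul_const (x - xb)).const_add xb
  have hγc : Continuous γ := by continuity
  have hfc : Continuous fun α => fderiv ℝ f (γ α) :=
    (hf.continuous_fderiv one_ne_zero).comp hγc
  have hcomp : ∀ α : ℝ, HasDerivAt (fun t => f (γ t))
      (fderiv ℝ f (γ α) (x - xb)) α := by
    intro α
    exact ((hf.differentiable one_ne_zero (γ α)).hasFDerivAt.comp_hasDerivAt α (hγd α))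
  have hint : ∫ α in (0:ℝ)..1, fderiv ℝ f (γ α) (x - xb) = f (γ 1) - f (γ 0) := by
    apply intervalIntegral.integral_eq_sub_of_hasDerivAt (f := fun t => f (γ t))
    · intro α _; exact hcomp α
    · exact (Continuous.intervalIntegrable (by
        exact (ContinuousLinearMap.apply ℝ ℝ (x - xb)).continuous.comp hfc) 0 1)
  have h1 : γ 1 = x := by simp [γ]
  have h0 : γ 0 = xb := by simp [γ]
  rw [h1, h0] at hint
  rw [← hint]
  have : ∀ α : ℝ, fderiv ℝ f (γ α) (x - xb)
      = ∑ j : Fin p, (x j - xb j) * fderiv ℝ f (γ α) (Pi.single j 1) := by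
    intro α
    have : (x - xb) = ∑ j : Fin p, (x j - xb j) • (Pi.single j 1 : Fin p → ℝ) := by
      ext i
      simp [Finset.sum_apply, Pi.single_apply]
    rw [this]
    simp [map_sum, smul_eq_mul]
  rw [intervalIntegral.integral_congr (fun α _ => this α)]
  rw [intervalIntegral.integral_finset_sum]
  · congr 1; ext j
    rw [← intervalIntegral.integral_const_mul]
  · intro j _
    exact (Continuous.intervalIntegrable (by
      exact continuous_const.mul ((ContinuousLinearMap.apply ℝ ℝ (Pi.single j 1)).continuous.comp hfc)) 0 1)
end

section
/- Fix n ≥ 2 and let F = { x ↦ a·x^n − x : a ∈ ℝ } be a class of univariate models. Let c ∈ (1/2, 1) be fixed (representing E_μ[X^n]), and define the attribution Φ(a) = a·(1 − c) − 1 and the derivative at x = 1 as f_a'(1) = n·a − 1. If a ~ Gaussian(0,1), then P[ sign(Φ(a)) ≠ sign(f_a'(1)) ] = P[ a ∈ (1/n, 1/(1−c)) ], and this probability lies strictly between P[a ∈ (1/2, 2)] and 1/2; in particular it exceeds 1/4. -/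
open ProbabilityTheory MeasureTheory Set Real

lemma exp_neg_ge (s : ℝ) (h0 : 0 ≤ s) (h8 : s ≤ 8) : (1 - s/8)^8 ≤ Real.exp (-s) := by
  have h1 : 1 - s/8 ≤ Real.exp (-(s/8)) := by
    have := Real.add_one_le_exp (-(s/8)); linarith
  have h2 : (0:ℝ) ≤ 1 - s/8 := by linarith
  calc (1 - s/8)^8 ≤ (Real.exp (-(s/8)))^8 := by gcongr
    _ = Real.exp (-s) := by
        rw [← Real.exp_nat_mul]; push_cast; ring_nf

lemma pdf_eq (x : ℝ) : gaussianPDFReal 0 1 x = (Real.sqrt (2*π))⁻¹ * Real.exp (-(x^2)/2) := by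
  simp [gaussianPDFReal]

lemma ptwise (u0 x : ℝ) :
    (Real.sqrt (2*π))⁻¹ * (Real.exp (-u0) * (1 + u0 - x^2/2)) ≤ gaussianPDFReal 0 1 x := by
  rw [pdf_eq]
  have hs : (0:ℝ) ≤ (Real.sqrt (2*π))⁻¹ := by positivity
  have h1 : Real.exp (-u0) * (1 + u0 - x^2/2) ≤ Real.exp (-(x^2)/2) := by
    have h2 := Real.add_one_le_exp (u0 - x^2/2)
    have h3 : Real.exp (-u0) * (u0 - x^2/2 + 1) ≤ Real.exp (-u0) * Real.exp (u0 - x^2/2) := by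
      have : (0:ℝ) < Real.exp (-u0) := Real.exp_pos _
      nlinarith
    rw [← Real.exp_add] at h3
    have : -u0 + (u0 - x^2/2) = -(x^2)/2 := by ring
    rw [this] at h3
    linarith
  exact mul_le_mul_of_nonneg_left h1 hs

lemma seg_bound (a b u0 : ℝ) (hab : a ≤ b) :
    (Real.sqrt (2*π))⁻¹ * (Real.exp (-u0) * ((1+u0)*(b-a) - (b^3-a^3)/6))
      ≤ ∫ x in a..b, gaussianPDFReal 0 1 x := by
  have hInt1 : IntervalIntegrable (fun x : ℝ => (Real.sqrt (2*π))⁻¹ * (Real.exp (-u0) * (1 + u0 - x^2/2))) volume a b := by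
    apply Continuous.intervalIntegrable; continuity
  have hInt2 : IntervalIntegrable (gaussianPDFReal 0 1) volume a b :=
    (integrable_gaussianPDFReal 0 1).intervalIntegrable
  have hmono := intervalIntegral.integral_mono_on hab hInt1 hInt2 (fun x _ => ptwise u0 x)
  refine le_trans (le_of_eq ?_) hmono
  have : (fun x : ℝ => (Real.sqrt (2*π))⁻¹ * (Real.exp (-u0) * (1 + u0 - x^2/2)))
      = fun x : ℝ => ((Real.sqrt (2*π))⁻¹ * (Real.exp (-u0) * (1 + u0))) - ((Real.sqrt (2*π))⁻¹ * Real.exp (-u0) / 2) * x^2 := by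
    ext x; ring
  rw [this]
  rw [intervalIntegral.integral_sub (by apply Continuous.intervalIntegrable; continuity)
      (by apply Continuous.intervalIntegrable; continuity)]
  rw [intervalIntegral.integral_const, intervalIntegral.integral_const_mul, integral_pow]
  simp only [smul_eq_mul]
  push_cast
  ring

lemma key_int : (1/4 : ℝ) < ∫ x in Set.Ioo (1/2:ℝ) 2, gaussianPDFReal 0 1 x := by
  rw [← MeasureTheory.integral_Ioc_eq_integral_Ioo,
    ← intervalIntegral.integral_of_le (by norm_num : (1/2:ℝ) ≤ 2)]
  have hI1 : IntervalIntegrable (gaussianPDFReal 0 1) volume (1/2) (5/4) :=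
    (integrable_gaussianPDFReal 0 1).intervalIntegrable
  have hI2 : IntervalIntegrable (gaussianPDFReal 0 1) volume (5/4) 2 :=
    (integrable_gaussianPDFReal 0 1).intervalIntegrable
  have hsplit := intervalIntegral.integral_add_adjacent_intervals hI1 hI2
  rw [← hsplit]
  have hb1 := seg_bound (1/2) (5/4) (13/32) (by norm_num)
  have hb2 := seg_bound (5/4) 2 (43/32) (by norm_num)
  have he1 : ((1:ℝ)+13/32)*(5/4-1/2) - ((5/4:ℝ)^3-(1/2:ℝ)^3)/6 = 3/4 := by norm_num
  have he2 : ((1:ℝ)+43/32)*(2-5/4) - ((2:ℝ)^3-(5/4:ℝ)^3)/6 = 3/4 := by norm_num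
  rw [he1] at hb1
  rw [he2] at hb2
  have hE1 : (243/256:ℝ)^8 ≤ Real.exp (-(13/32)) := by
    have h := exp_neg_ge (13/32) (by norm_num) (by norm_num)
    norm_num at h ⊢
    exact h
  have hE2 : (213/256:ℝ)^8 ≤ Real.exp (-(43/32)) := by
    have h := exp_neg_ge (43/32) (by norm_num) (by norm_num)
    norm_num at h ⊢
    exact h
  have hπ : Real.sqrt (2*π) < 2.51 := by
    have h2π : 2*π < 2.51^2 := by nlinarith [Real.pi_lt_d2]
    exact (Real.sqrt_lt' (by norm_num)).mpr h2π
  have hsqpos : (0:ℝ) < Real.sqrt (2*π) := Real.sqrt_pos.mpr (by positivity)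
  have hs : ((2.51:ℝ))⁻¹ < (Real.sqrt (2*π))⁻¹ := by
    exact inv_strictAnti₀ hsqpos hπ
  have hspos : (0:ℝ) < (Real.sqrt (2*π))⁻¹ := by positivity
  have hnum : (1/4:ℝ) < (2.51:ℝ)⁻¹ * (((243/256:ℝ)^8 + (213/256:ℝ)^8) * (3/4)) := by
    norm_num
  have hmid : (2.51:ℝ)⁻¹ * (((243/256:ℝ)^8 + (213/256:ℝ)^8) * (3/4))
      ≤ (Real.sqrt (2*π))⁻¹ * (Real.exp (-(13/32)) * (3/4))
        + (Real.sqrt (2*π))⁻¹ * (Real.exp (-(43/32)) * (3/4)) := by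
    have step1 : (2.51:ℝ)⁻¹ * (((243/256:ℝ)^8 + (213/256:ℝ)^8) * (3/4))
        ≤ (Real.sqrt (2*π))⁻¹ * (((243/256:ℝ)^8 + (213/256:ℝ)^8) * (3/4)) := by
      exact mul_le_mul_of_nonneg_right hs.le (by positivity)
    have step2 : (Real.sqrt (2*π))⁻¹ * (((243/256:ℝ)^8 + (213/256:ℝ)^8) * (3/4))
        ≤ (Real.sqrt (2*π))⁻¹ * ((Real.exp (-(13/32)) + Real.exp (-(43/32))) * (3/4)) := by
      gcongr
    nlinarith [step1, step2]
  have h1332 : (-(13/32):ℝ) = -(13/32) := rfl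
  linarith [hb1, hb2, hnum, hmid]

lemma m_singleton (x : ℝ) : gaussianReal 0 1 {x} = 0 :=
  gaussianReal_absolutelyContinuous 0 one_ne_zero (measure_singleton x)

lemma m_pos_Ioo {a b : ℝ} (h : a < b) : 0 < gaussianReal 0 1 (Set.Ioo a b) := by
  rw [pos_iff_ne_zero]
  intro h0
  have hv := gaussianReal_absolutelyContinuous' 0 one_ne_zero h0
  rw [Real.volume_Ioo] at hv
  simp only [ENNReal.ofReal_eq_zero] at hv
  linarith

lemma m_Icc_eq_Ioo {a b : ℝ} (hab : a ≤ b) :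
    gaussianReal 0 1 (Set.Icc a b) = gaussianReal 0 1 (Set.Ioo a b) := by
  apply le_antisymm
  · have hsub : Set.Icc a b ⊆ {a} ∪ (Set.Ioo a b ∪ {b}) := by
      intro x hx
      rcases eq_or_lt_of_le hx.1 with h1 | h1
      · exact Or.inl (by simp [← h1])
      rcases eq_or_lt_of_le hx.2 with h2 | h2
      · exact Or.inr (Or.inr (by simp [h2]))
      · exact Or.inr (Or.inl ⟨h1, h2⟩)
    calc gaussianReal 0 1 (Set.Icc a b) ≤ _ := measure_mono hsub
      _ ≤ gaussianReal 0 1 {a} + (gaussianReal 0 1 (Set.Ioo a b) + gaussianReal 0 1 {b}) :=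
        le_trans (measure_union_le _ _) (by gcongr; exact measure_union_le _ _)
      _ = gaussianReal 0 1 (Set.Ioo a b) := by rw [m_singleton, m_singleton]; simp
  · exact measure_mono Set.Ioo_subset_Icc_self

lemma m_Ioi_zero : gaussianReal 0 1 (Set.Ioi (0:ℝ)) = 1/2 := by
  have hmap : (gaussianReal 0 1).map (fun x : ℝ => -x) = gaussianReal 0 1 := by
    have h := gaussianReal_map_const_mul (μ := 0) (v := 1) (-1)
    have he : (fun x : ℝ => -x) = (fun x : ℝ => (-1:ℝ) * x) := by funext x; ring
    rw [he, h]
    congr 1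
    · ring
    · ext
      norm_num
  have hIio : gaussianReal 0 1 (Set.Iio (0:ℝ)) = gaussianReal 0 1 (Set.Ioi (0:ℝ)) := by
    conv_lhs => rw [← hmap]
    rw [Measure.map_apply measurable_neg measurableSet_Iio]
    congr 1
    ext x
    simp
  have hIci : gaussianReal 0 1 (Set.Ici (0:ℝ)) = gaussianReal 0 1 (Set.Ioi (0:ℝ)) := by
    apply le_antisymm
    · rw [← Set.Ioi_insert, Set.insert_eq]
      calc gaussianReal 0 1 ({(0:ℝ)} ∪ Set.Ioi 0)
          ≤ gaussianReal 0 1 {(0:ℝ)} + gaussianReal 0 1 (Set.Ioi (0:ℝ)) := measure_union_le _ _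
        _ = gaussianReal 0 1 (Set.Ioi (0:ℝ)) := by rw [m_singleton]; simp
    · exact measure_mono Set.Ioi_subset_Ici_self
  have hcompl : gaussianReal 0 1 (Set.Iio (0:ℝ)) + gaussianReal 0 1 (Set.Ici (0:ℝ)) = 1 := by
    have := measure_add_measure_compl (μ := gaussianReal 0 1) (measurableSet_Iio (a := (0:ℝ)))
    rwa [Set.compl_Iio, measure_univ] at this
  rw [hIio, hIci] at hcompl
  rw [ENNReal.eq_div_iff (by norm_num) (by norm_num), two_mul]
  exact hcompl

theorem stmt6 (n : ℕ) (hn : 2 ≤ n) (c : ℝ) (hc : c ∈ Set.Ioo (1/2 : ℝ) 1) :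
    (gaussianReal 0 1) {a : ℝ | Real.sign (a * (1 - c) - 1) ≠ Real.sign ((n : ℝ) * a - 1)}
      = (gaussianReal 0 1) (Set.Ioo (1 / (n : ℝ)) (1 / (1 - c))) ∧
    (gaussianReal 0 1) (Set.Ioo (1/2 : ℝ) 2)
      < (gaussianReal 0 1) {a : ℝ | Real.sign (a * (1 - c) - 1) ≠ Real.sign ((n : ℝ) * a - 1)} ∧
    (gaussianReal 0 1) {a : ℝ | Real.sign (a * (1 - c) - 1) ≠ Real.sign ((n : ℝ) * a - 1)} < 1/2 ∧
    (1/4 : ENNReal) < (gaussianReal 0 1) {a : ℝ | Real.sign (a * (1 - c) - 1) ≠ Real.sign ((n : ℝ) * a - 1)} := by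
  obtain ⟨hc1, hc2⟩ := hc
  have h1c : (0:ℝ) < 1 - c := by linarith
  set β : ℝ := 1 / (1 - c) with hβdef
  set α : ℝ := 1 / (n:ℝ) with hαdef
  have hn2 : (2:ℝ) ≤ (n:ℝ) := by exact_mod_cast hn
  have hnpos : (0:ℝ) < (n:ℝ) := by linarith
  have hβ2 : (2:ℝ) < β := by
    rw [hβdef, lt_div_iff₀ h1c]; linarith
  have hβc : β * (1 - c) = 1 := by
    rw [hβdef]; field_simp
  have hα2 : α ≤ 1/2 := by
    rw [hαdef, div_le_div_iff₀ hnpos (by norm_num)]; linarith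
  have hαpos : (0:ℝ) < α := by rw [hαdef]; positivity
  have hαn : α * (n:ℝ) = 1 := by rw [hαdef]; field_simp
  have hαβ : α < β := by linarith
  -- the disagreement set is exactly Icc α β
  have hset : {a : ℝ | Real.sign (a * (1 - c) - 1) ≠ Real.sign ((n : ℝ) * a - 1)}
      = Set.Icc α β := by
    ext a
    simp only [Set.mem_setOf_eq, Set.mem_Icc]
    constructor
    · intro hne
      constructor
      · by_contra hlt
        push_neg at hlt
        have e1 : a * (1 - c) - 1 < 0 := by nlinarith
        have e2 : (n:ℝ) * a - 1 < 0 := by nlinarith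
        rw [Real.sign_of_neg e1, Real.sign_of_neg e2] at hne
        exact hne rfl
      · by_contra hgt
        push_neg at hgt
        have e1 : 0 < a * (1 - c) - 1 := by nlinarith
        have e2 : 0 < (n:ℝ) * a - 1 := by nlinarith
        rw [Real.sign_of_pos e1, Real.sign_of_pos e2] at hne
        exact hne rfl
    · rintro ⟨h1, h2⟩
      rcases eq_or_lt_of_le h2 with hb | hb
      · have e1 : a * (1 - c) - 1 = 0 := by rw [hb]; linarith
        have e2 : 0 < (n:ℝ) * a - 1 := by nlinarith
        rw [e1, Real.sign_zero, Real.sign_of_pos e2]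
        norm_num
      · have e1 : a * (1 - c) - 1 < 0 := by nlinarith
        rcases eq_or_lt_of_le h1 with ha | ha
        · have e2 : (n:ℝ) * a - 1 = 0 := by rw [← ha]; linarith
          rw [e2, Real.sign_zero, Real.sign_of_neg e1]
          norm_num
        · have e2 : 0 < (n:ℝ) * a - 1 := by nlinarith
          rw [Real.sign_of_neg e1, Real.sign_of_pos e2]
          norm_num
  have hmS : gaussianReal 0 1 {a : ℝ | Real.sign (a * (1 - c) - 1) ≠ Real.sign ((n : ℝ) * a - 1)}
      = gaussianReal 0 1 (Set.Ioo α β) := by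
    rw [hset, m_Icc_eq_Ioo hαβ.le]
  -- strict inequality with Ioo (1/2) 2
  have hlt1 : gaussianReal 0 1 (Set.Ioo (1/2 : ℝ) 2) < gaussianReal 0 1 (Set.Ioo α β) := by
    have hdisj : Disjoint (Set.Ioo (1/2:ℝ) 2) (Set.Ioo (2:ℝ) β) :=
      Set.disjoint_left.mpr fun x hx hx' => absurd hx.2 (not_lt.mpr hx'.1.le)
    have hsub : Set.Ioo (1/2:ℝ) 2 ∪ Set.Ioo (2:ℝ) β ⊆ Set.Ioo α β := by
      rintro x (hx | hx)
      · exact ⟨by linarith [hx.1], by linarith [hx.2]⟩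
      · exact ⟨by linarith [hx.1], hx.2⟩
    calc gaussianReal 0 1 (Set.Ioo (1/2:ℝ) 2)
        < gaussianReal 0 1 (Set.Ioo (1/2:ℝ) 2) + gaussianReal 0 1 (Set.Ioo (2:ℝ) β) :=
          ENNReal.lt_add_right (measure_ne_top _ _) (m_pos_Ioo hβ2).ne'
      _ = gaussianReal 0 1 (Set.Ioo (1/2:ℝ) 2 ∪ Set.Ioo (2:ℝ) β) :=
          (measure_union hdisj measurableSet_Ioo).symm
      _ ≤ gaussianReal 0 1 (Set.Ioo α β) := measure_mono hsub
  -- less than 1/2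
  have hlt2 : gaussianReal 0 1 (Set.Ioo α β) < 1/2 := by
    have hdisj : Disjoint (Set.Ioo α β) (Set.Ioo (0:ℝ) α) :=
      Set.disjoint_left.mpr fun x hx hx' => absurd hx.1 (not_lt.mpr hx'.2.le)
    have hsub : Set.Ioo α β ∪ Set.Ioo (0:ℝ) α ⊆ Set.Ioi (0:ℝ) := by
      rintro x (hx | hx)
      · exact lt_trans hαpos hx.1
      · exact hx.1
    calc gaussianReal 0 1 (Set.Ioo α β)
        < gaussianReal 0 1 (Set.Ioo α β) + gaussianReal 0 1 (Set.Ioo (0:ℝ) α) :=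
          ENNReal.lt_add_right (measure_ne_top _ _) (m_pos_Ioo hαpos).ne'
      _ = gaussianReal 0 1 (Set.Ioo α β ∪ Set.Ioo (0:ℝ) α) :=
          (measure_union hdisj measurableSet_Ioo).symm
      _ ≤ gaussianReal 0 1 (Set.Ioi (0:ℝ)) := measure_mono hsub
      _ = 1/2 := m_Ioi_zero
  -- 1/4 lower bound
  have hq : (1/4 : ENNReal) < gaussianReal 0 1 (Set.Ioo (1/2 : ℝ) 2) := by
    rw [gaussianReal_apply_eq_integral 0 one_ne_zero]
    have h14 : (1/4 : ENNReal) = ENNReal.ofReal (1/4 : ℝ) := by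
      rw [ENNReal.ofReal_div_of_pos (by norm_num)]
      norm_num
    rw [h14]
    exact (ENNReal.ofReal_lt_ofReal_iff (by linarith [key_int])).mpr key_int
  exact ⟨hmS, by rw [hmS]; exact hlt1, by rw [hmS]; exact hlt2,
    lt_trans hq (by rw [hmS]; exact hlt1)⟩
end

section
/- Let f : ℝ → ℝ be additively trivial and consider the two-piece linear construction: given reals x_L < x − δ < x + δ < x_R, values g_L, g_R ∈ ℝ, and slopes β_L, β_R ∈ ℝ, define f(x') = β_L·(x' − x + δ) + g_L for x' ∈ (x_L, x − δ), f(x') = g(x') for x' ∈ [x − δ, x + δ] where g is a given continuous function with g(x−δ)=g_L and g(x+δ)=g_R, f(x') = β_R·(x' − x − δ) + g_R for x' ∈ (x + δ, x_R), and f(x') = 0 otherwise. Suppose μ is a probability measure on ℝ with μ((x_L, x−δ)) > 0. Then for every target value φ ∈ ℝ there exists β_L ∈ ℝ (with β_R = 0) such that g(x) − E_{X∼μ}[f(X)] = φ. -/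
open MeasureTheory

theorem stmt12 (x δ xL xR : ℝ) (hδ : 0 < δ) (h1 : xL < x - δ) (h2 : x + δ < xR)
    (g : ℝ → ℝ) (hg : Continuous g)
    (μ : Measure ℝ) [IsProbabilityMeasure μ]
    (hμ : 0 < μ (Set.Ioo xL (x - δ)))
    (F : ℝ → ℝ → ℝ)
    (hF : ∀ βL t, F βL t =
      if t ∈ Set.Ioo xL (x - δ) then βL * (t - x + δ) + g (x - δ)
      else if t ∈ Set.Icc (x - δ) (x + δ) then g t
      else if t ∈ Set.Ioo (x + δ) xR then (0:ℝ) * (t - x - δ) + g (x + δ)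
      else 0) :
    ∀ φ : ℝ, ∃ βL : ℝ, g x - ∫ t, F βL t ∂μ = φ := by
  intro φ
  set S : Set ℝ := Set.Ioo xL (x - δ) with hS
  have hmS : MeasurableSet S := measurableSet_Ioo
  set h : ℝ → ℝ := S.indicator (fun t => t - x + δ) with hh
  -- F βL = F 0 + βL • h pointwise
  have hdecomp : ∀ βL t, F βL t = F 0 t + βL * h t := by
    intro βL t
    by_cases ht : t ∈ S
    · rw [hS] at ht
      simp [hF, ht, hh, Set.indicator_of_mem (s := S) ht]; ring
    · rw [hS] at ht
      simp [hF, ht, hh, Set.indicator_of_notMem (s := S) ht]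
  -- measurability of F 0
  have hmF0 : Measurable (F 0) := by
    have : F 0 = fun t =>
        if t ∈ S then (0:ℝ) * (t - x + δ) + g (x - δ)
        else if t ∈ Set.Icc (x - δ) (x + δ) then g t
        else if t ∈ Set.Ioo (x + δ) xR then (0:ℝ) * (t - x - δ) + g (x + δ)
        else 0 := by funext t; exact hF 0 t
    rw [this]
    refine Measurable.ite hmS (by fun_prop) ?_
    refine Measurable.ite measurableSet_Icc hg.measurable ?_
    exact Measurable.ite measurableSet_Ioo (by fun_prop) measurable_const
  -- boundedness of F 0
  obtain ⟨C, hC⟩ : ∃ C, ∀ t ∈ Set.Icc (x - δ) (x + δ), |g t| ≤ C := by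
    obtain ⟨C, hC⟩ := (isCompact_Icc (a := x - δ) (b := x + δ)).exists_bound_of_continuousOn
      hg.continuousOn
    exact ⟨C, fun t ht => by simpa using hC t ht⟩
  have hmemL : (x - δ) ∈ Set.Icc (x - δ) (x + δ) := by
    constructor <;> nlinarith
  have hmemR : (x + δ) ∈ Set.Icc (x - δ) (x + δ) := by
    constructor <;> nlinarith
  have hC0 : 0 ≤ C := le_trans (abs_nonneg _) (hC _ hmemL)
  have hboundF0 : ∀ t, |F 0 t| ≤ C := by
    intro t
    rw [hF]
    split_ifs with h1' h2' h3'
    · simpa using hC _ hmemL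
    · exact hC _ h2'
    · simpa using hC _ hmemR
    · simpa using hC0
  have hintF0 : Integrable (F 0) μ :=
    Integrable.mono' (integrable_const C) hmF0.aestronglyMeasurable
      (ae_of_all _ (fun t => by simpa using hboundF0 t))
  -- integrability of h
  have hmh : Measurable h := (by fun_prop : Measurable fun t : ℝ => t - x + δ).indicator hmS
  have hboundh : ∀ t, |h t| ≤ (x - δ) - xL := by
    intro t
    by_cases ht : t ∈ S
    · rw [hh, Set.indicator_of_mem ht]
      obtain ⟨ha, hb⟩ := ht
      rw [abs_le]; constructor <;> nlinarith
    · rw [hh, Set.indicator_of_notMem ht]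
      simp; linarith
  have hinth : Integrable h μ :=
    Integrable.mono' (integrable_const ((x - δ) - xL)) hmh.aestronglyMeasurable
      (ae_of_all _ (fun t => by simpa using hboundh t))
  -- the coefficient c
  set c : ℝ := ∫ t, h t ∂μ with hc
  have hcneg : c < 0 := by
    have hIO : IntegrableOn (fun t => t - x + δ) S μ :=
      (integrable_indicator_iff hmS).mp hinth
    have hIO' : IntegrableOn (fun t => (x - δ) - t) S μ := by
      have : (fun t : ℝ => (x - δ) - t) = fun t => -(t - x + δ) := by funext t; ring
      rw [this]; exact hIO.neg
    have hpos : 0 < ∫ t in S, ((x - δ) - t) ∂μ := by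
      rw [setIntegral_pos_iff_support_of_nonneg_ae]
      · have hsub : S ⊆ Function.support (fun t : ℝ => (x - δ) - t) ∩ S := by
          intro t ht
          refine ⟨?_, ht⟩
          have : t < x - δ := ht.2
          simp [Function.support, sub_ne_zero]
          linarith
        exact lt_of_lt_of_le hμ (measure_mono hsub)
      · filter_upwards [ae_restrict_mem hmS] with t ht
        have : t < x - δ := ht.2
        simp; linarith
      · exact hIO'
    have : c = ∫ t in S, (t - x + δ) ∂μ := by
      rw [hc, hh, integral_indicator hmS]
    rw [this]
    have heq : ∫ t in S, (t - x + δ) ∂μ = -∫ t in S, ((x - δ) - t) ∂μ := by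
      rw [← integral_neg]
      congr 1; funext t; ring
    rw [heq]; linarith
  have hcne : c ≠ 0 := ne_of_lt hcneg
  -- solve
  refine ⟨(g x - (∫ t, F 0 t ∂μ) - φ) / c, ?_⟩
  have hint : ∫ t, F ((g x - (∫ t, F 0 t ∂μ) - φ) / c) t ∂μ
      = (∫ t, F 0 t ∂μ) + ((g x - (∫ t, F 0 t ∂μ) - φ) / c) * c := by
    set β := (g x - (∫ t, F 0 t ∂μ) - φ) / c
    have : (fun t => F β t) = fun t => F 0 t + β * h t := by
      funext t; exact hdecomp β t
    rw [this, integral_add hintF0 (hinth.const_mul β), integral_const_mul]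
  rw [hint, div_mul_cancel₀ _ hcne]
  ring
end
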